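/- arXiv:1604.02652 — 4 statements merged into one kernel-verified Lean document; each statement's English description precedes it below -/
import Mathlib

section
/- Let T be a junction tree on a finite vertex set V with clusters (K_t) and edge separators (S_e), and let A ⊆ V be a subset contained in at least one cluster. Then #{t : A ⊆ K_t} = #{edges e of T : A ⊆ S_e} + 1. -/
/-!
By the junction property, the nodes whose clusters contain `A` are closed under taking paths of
`T`, so they induce a subtree. Its edges are exactly the edges of `T` whose separator contains `A`,
and a finite tree has one more vertex than it has edges.
-/

open SimpleGraph Finset

namespace SimpleGraph

variable {ι : Type*} {T : SimpleGraph ι}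

lemma connected_induce_of_forall_isPath_support_subset (hT : T.Preconnected) {s : Set ι}
    (hs : s.Nonempty)
    (hconvex : ∀ a ∈ s, ∀ b ∈ s, ∀ p : T.Walk a b, p.IsPath → ∀ u ∈ p.support, u ∈ s) :
    (T.induce s).Connected := by
  have : Nonempty s := hs.to_subtype
  refine ⟨fun a b => ?_⟩
  obtain ⟨p, hp⟩ := hT.exists_isPath a b
  exact ⟨p.induce s (hconvex a a.2 b b.2 p hp)⟩

lemma IsTree.isTree_induce (hT : T.IsTree) {s : Set ι} (hs : s.Nonempty)
    (hconvex : ∀ a ∈ s, ∀ b ∈ s, ∀ p : T.Walk a b, p.IsPath → ∀ u ∈ p.support, u ∈ s) :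
    (T.induce s).IsTree :=
  ⟨connected_induce_of_forall_isPath_support_subset hT.connected.preconnected hs hconvex,
    hT.isAcyclic.induce s⟩

end SimpleGraph

theorem junctionTree_card_clusters_containing_eq_card_separators_add_one_general
    {V ι : Type*} [DecidableEq V] [Fintype ι]
    (T : SimpleGraph ι) [DecidableRel T.Adj] (hT : T.IsTree)
    (K : ι → Finset V)
    (hjun : ∀ (s t u : ι) (p : T.Walk s t), p.IsPath → u ∈ p.support →
      K s ∩ K t ⊆ K u)
    (sep : Sym2 ι → Finset V)
    (hsep : sep = Sym2.lift ⟨fun a b => K a ∩ K b, fun a b => Finset.inter_comm _ _⟩)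
    (A : Finset V) (hA : ∃ t : ι, A ⊆ K t) :
    (Finset.univ.filter fun t : ι => A ⊆ K t).card
      = (T.edgeFinset.filter fun e => A ⊆ sep e).card + 1 := by
  classical
  set U : Set ι := {t | A ⊆ K t}
  have htree : (T.induce U).IsTree :=
    hT.isTree_induce hA fun a ha b hb p hp u hu => (subset_inter ha hb).trans (hjun a b u p hp hu)
  have hsepU : T.edgeFinset.filter (fun e => A ⊆ sep e) = T.edgeFinset ∩ U.toFinset.sym2 := by
    ext e
    induction e using Sym2.ind with
    | _ => simp [hsep, U, subset_inter_iff]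
  rw [hsepU, ← map_edgeFinset_induce, card_map, htree.card_edgeFinset, ← Set.toFinset_card]
  simp [U]

/-- Let `T` be a junction tree on a finite vertex set `V` with
clusters `K t` and edge separators `S {s,t} = K s ∩ K t`, and let `A ⊆ V` be a
subset contained in at least one cluster. Then the number of clusters containing
`A` exceeds by exactly one the number of edges of `T` whose separator contains `A`. -/
theorem junctionTree_card_clusters_containing_eq_card_separators_add_one
    {V ι : Type*} [Fintype V] [DecidableEq V] [Fintype ι] [DecidableEq ι]
    (T : SimpleGraph ι) [DecidableRel T.Adj] (hT : T.IsTree)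
    (K : ι → Finset V)
    (hcov : ∀ v : V, ∃ t : ι, v ∈ K t)
    (hjun : ∀ (s t u : ι) (p : T.Walk s t), p.IsPath → u ∈ p.support →
      K s ∩ K t ⊆ K u)
    (sep : Sym2 ι → Finset V)
    (hsep : sep = Sym2.lift ⟨fun a b => K a ∩ K b, fun a b => Finset.inter_comm _ _⟩)
    (A : Finset V) (hA : ∃ t : ι, A ⊆ K t) :
    (Finset.univ.filter fun t : ι => A ⊆ K t).card
      = (T.edgeFinset.filter fun e => A ⊆ sep e).card + 1 :=
  junctionTree_card_clusters_containing_eq_card_separators_add_one_general T hT K hjun sep hsep A hA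
end

section
/- (Pointwise algebraic form of the junction tree copula theorem.) Let T be a junction tree on a finite vertex set V with clusters (K_t) and edge separators (S_e). Let f be a real number and, for each v ∈ V, let f_v be a positive real number; for each node t let f_{K_t} and c_{K_t} be real numbers with f_{K_t} = c_{K_t} · ∏_{v ∈ K_t} f_v, and for each edge e let f_{S_e} and c_{S_e} be real numbers with f_{S_e} = c_{S_e} · ∏_{v ∈ S_e} f_v. If the junction tree factorization f · ∏_{e ∈ edges(T)} f_{S_e} = ∏_{t ∈ nodes(T)} f_{K_t} holds, then f · ∏_{e ∈ edges(T)} c_{S_e} = (∏_{t ∈ nodes(T)} c_{K_t}) · ∏_{v ∈ V} f_v. (In particular, the copula density c := f / ∏_{v∈V} f_v of a junction tree probability density factorizes over the same junction tree: c · ∏_e c_{S_e} = ∏_t c_{K_t}.) -/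
/-!
Fix a vertex `v`. By the junction property the nodes whose cluster contains `v` span a subtree
of `T`, and the edges of that subtree are exactly the edges whose separator contains `v`; a tree
has one more node than edges, so `v` lies in exactly one more cluster than separator. Hence
`∏_t ∏_{K_t} f_v = (∏_e ∏_{S_e} f_v) · ∏_V f_v`, and substituting Sklar's decompositions into
the junction tree factorization leaves the claim after cancelling the positive factor
`∏_e ∏_{S_e} f_v`.
-/

open Finset

namespace SimpleGraph

variable {ι : Type*} {T : SimpleGraph ι}

theorem IsTree.induce_isTree (hT : T.IsTree) {A : Set ι} (hA : A.Nonempty)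
    (hconv : ∀ s ∈ A, ∀ t ∈ A, ∀ p : T.Walk s t, p.IsPath → ∀ u ∈ p.support, u ∈ A) :
    (T.induce A).IsTree := by
  have := hA.to_subtype
  refine ⟨⟨?_⟩, hT.isAcyclic.induce A⟩
  rintro ⟨s, hs⟩ ⟨t, ht⟩
  obtain ⟨p, hp⟩ := hT.existsUnique_path s t |>.exists
  exact ⟨p.induce A (hconv s hs t ht p hp)⟩

theorem IsTree.card_edgeFinset_inter_sym2_add_one [Fintype ι] [DecidableEq ι]
    [DecidableRel T.Adj] (hT : T.IsTree) {A : Finset ι} (hA : A.Nonempty)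
    (hconv : ∀ s ∈ A, ∀ t ∈ A, ∀ p : T.Walk s t, p.IsPath → ∀ u ∈ p.support, u ∈ A) :
    #(T.edgeFinset ∩ A.sym2) + 1 = #A := by
  have hA' : (T.induce (A : Set ι)).IsTree := hT.induce_isTree hA hconv
  have hedges := map_edgeFinset_induce (G := T) (s := (A : Set ι))
  rw [Finset.toFinset_coe] at hedges
  rw [← hedges, card_map]
  convert hA'.card_edgeFinset
  simp

end SimpleGraph

theorem Finset.prod_prod_eq_prod_pow_card {α β M : Type*} [CommMonoid M] [Fintype β]
    [DecidableEq β] (s : Finset α) (K : α → Finset β) (g : β → M) :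
    ∏ a ∈ s, ∏ b ∈ K a, g b = ∏ b, g b ^ #{a ∈ s | b ∈ K a} := by
  rw [prod_comm' (t' := univ) (s' := fun b => {a ∈ s | b ∈ K a}) (by simp)]
  simp only [prod_const]

section JunctionTree

variable {V ι : Type*} [DecidableEq V] {K : ι → Finset V} {sep : Sym2 ι → Finset V}

theorem mem_separator_iff (hsep : ∀ a b, sep s(a, b) = K a ∩ K b) {v : V} {e : Sym2 ι} :
    v ∈ sep e ↔ ∀ t ∈ e, v ∈ K t := by
  induction e using Sym2.ind with
  | _ a b => simp [hsep]

variable [Fintype ι] [DecidableEq ι] {T : SimpleGraph ι} [DecidableRel T.Adj]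

theorem card_clusters_mem_eq_card_separators_mem_add_one (hT : T.IsTree)
    (hjun : ∀ (s t u : ι) (p : T.Walk s t), p.IsPath → u ∈ p.support → K s ∩ K t ⊆ K u)
    (hsep : ∀ a b, sep s(a, b) = K a ∩ K b) {v : V} (hv : ∃ t, v ∈ K t) :
    #{t | v ∈ K t} = #{e ∈ T.edgeFinset | v ∈ sep e} + 1 := by
  obtain ⟨t, ht⟩ := hv
  rw [← hT.card_edgeFinset_inter_sym2_add_one ⟨t, by simpa using ht⟩]
  · simp [← filter_mem_eq_inter, mem_sym2_iff, mem_separator_iff hsep]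
  · simp only [mem_filter, mem_univ, true_and]
    exact fun s hs t ht p hp u hu => hjun s t u p hp hu (mem_inter.2 ⟨hs, ht⟩)

theorem prod_clusters_eq_prod_separators_mul [Fintype V] {M : Type*} [CommMonoid M]
    (hT : T.IsTree) (hcov : ∀ v, ∃ t, v ∈ K t)
    (hjun : ∀ (s t u : ι) (p : T.Walk s t), p.IsPath → u ∈ p.support → K s ∩ K t ⊆ K u)
    (hsep : ∀ a b, sep s(a, b) = K a ∩ K b) (g : V → M) :
    ∏ t, ∏ v ∈ K t, g v = (∏ e ∈ T.edgeFinset, ∏ v ∈ sep e, g v) * ∏ v, g v := by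
  simp only [Finset.prod_prod_eq_prod_pow_card, ← prod_mul_distrib, ← pow_succ,
    card_clusters_mem_eq_card_separators_mem_add_one hT hjun hsep (hcov _)]

end JunctionTree

/-- pointwise algebraic form of the junction tree copula theorem.
Let `T` be a junction tree on a finite vertex set `V` with clusters `K t` and edge
separators `sep e = K s ∩ K t` for `e = s(s,t)`. Let `f : ℝ`, let `fv v > 0` for each
`v ∈ V`, and suppose each cluster/separator density splits à la Sklar into its copula
density times the product of the univariate densities:
`fK t = cK t * ∏_{v ∈ K t} fv v` and `fS e = cS e * ∏_{v ∈ sep e} fv v`.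
If the junction tree factorization `f * ∏_{e} fS e = ∏_{t} fK t` holds, then
`f * ∏_{e} cS e = (∏_{t} cK t) * ∏_{v ∈ V} fv v`. -/
theorem junctionTree_copula_factorization
    {V ι : Type*} [Fintype V] [DecidableEq V] [Fintype ι] [DecidableEq ι]
    (T : SimpleGraph ι) [DecidableRel T.Adj] (hT : T.IsTree)
    (K : ι → Finset V)
    (hcov : ∀ v : V, ∃ t : ι, v ∈ K t)
    (hjun : ∀ (s t u : ι) (p : T.Walk s t), p.IsPath → u ∈ p.support →
      K s ∩ K t ⊆ K u)
    (sep : Sym2 ι → Finset V)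
    (hsep : sep = Sym2.lift ⟨fun a b => K a ∩ K b, fun a b => Finset.inter_comm _ _⟩)
    (f : ℝ) (fv : V → ℝ) (hfv : ∀ v : V, 0 < fv v)
    (fK cK : ι → ℝ) (fS cS : Sym2 ι → ℝ)
    (hK : ∀ t : ι, fK t = cK t * ∏ v ∈ K t, fv v)
    (hS : ∀ e ∈ T.edgeFinset, fS e = cS e * ∏ v ∈ sep e, fv v)
    (hfac : f * ∏ e ∈ T.edgeFinset, fS e = ∏ t : ι, fK t) :
    f * ∏ e ∈ T.edgeFinset, cS e = (∏ t : ι, cK t) * ∏ v : V, fv v := by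
  set P := ∏ e ∈ T.edgeFinset, ∏ v ∈ sep e, fv v
  have hP : P ≠ 0 := (prod_pos fun e _ => prod_pos fun v _ => hfv v).ne'
  have hclusters : ∏ t, ∏ v ∈ K t, fv v = P * ∏ v, fv v :=
    prod_clusters_eq_prod_separators_mul hT hcov hjun (by simp [hsep]) fv
  rw [prod_congr rfl hS, prod_mul_distrib] at hfac
  simp only [hK, prod_mul_distrib, hclusters] at hfac
  exact mul_right_cancel₀ hP (by linear_combination hfac)
end

section
/- A finite family of finite sets K_1, …, K_n admits a reordering satisfying the running intersection property if and only if there exists a tree T on the index set {1, …, n} with the junction property, i.e., such that for all indices s, t and every index u on the unique path in T between s and t, K_s ∩ K_t ⊆ K_u. -/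
/-!
If `K (σ j)` meets its predecessors inside an earlier `K (σ i)`, joining `σ j` to `σ i` gives a
tree in which every vertex has exactly one neighbour of smaller rank, its parent. So the vertex
of largest rank on a path is an endpoint, and replacing it by its parent shortens the path;
since `K s ∩ K t ⊆ K (parent t)` when `s` has smaller rank than `t`, the junction property
follows by induction on the length of the path.

Conversely, enumerate the vertices of a tree by their distance to a root. Every vertex `v` but
the first is adjacent to an earlier vertex `w`, and any earlier vertex `s` is joined to `v` by a
path through `w` all of whose other vertices precede `v`; the junction property on this path
gives `K s ∩ K v ⊆ K w`.
-/

open Finset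

section

variable {α V β : Type*}

def RunningIntersection [DecidableEq α] {n : ℕ} (K : Fin n → Finset α) : Prop :=
  ∀ j : Fin n, 0 < (j : ℕ) →
    ∃ i : Fin n, i < j ∧ K j ∩ (univ.filter (fun i' : Fin n => i' < j)).biUnion K ⊆ K i

namespace SimpleGraph

def HasJunctionProperty [DecidableEq α] (T : SimpleGraph V) (K : V → Finset α) : Prop :=
  ∀ (s t u : V) (p : T.Walk s t), p.IsPath → u ∈ p.support → K s ∩ K t ⊆ K u

section ParentGraph

variable [LinearOrder β] {root : V} {r : V → β} {par : V → V}

def parentGraph (root : V) (par : V → V) : SimpleGraph V :=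
  fromRel fun v w => v ≠ root ∧ w = par v

lemma parentGraph_adj_par (hpar : ∀ v, v ≠ root → r (par v) < r v) {v : V} (hv : v ≠ root) :
    (parentGraph root par).Adj v (par v) :=
  (fromRel_adj _ _ _).2 ⟨fun h => (hpar v hv).ne (h ▸ rfl), Or.inl ⟨hv, rfl⟩⟩

lemma eq_par_of_parentGraph_adj (hpar : ∀ v, v ≠ root → r (par v) < r v) {v w : V}
    (h : (parentGraph root par).Adj v w) (hle : r w ≤ r v) : v ≠ root ∧ w = par v := by
  obtain ⟨-, h | ⟨hw, rfl⟩⟩ := (fromRel_adj _ _ _).1 h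
  · exact h
  · exact absurd hle (hpar w hw).not_ge

lemma parentGraph_reachable_root [WellFoundedLT β] (hpar : ∀ v, v ≠ root → r (par v) < r v)
    (v : V) : (parentGraph root par).Reachable v root := by
  induction hv : r v using WellFoundedLT.induction generalizing v with
  | _ b ih =>
    subst hv
    by_cases hroot : v = root
    · exact hroot ▸ Reachable.refl _
    · exact (parentGraph_adj_par hpar hroot).reachable.trans (ih _ (hpar v hroot) _ rfl)

lemma parentGraph_connected [WellFoundedLT β] (hpar : ∀ v, v ≠ root → r (par v) < r v) :
    (parentGraph root par).Connected :=
  have : Nonempty V := ⟨root⟩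
  ⟨fun u v => (parentGraph_reachable_root hpar u).trans (parentGraph_reachable_root hpar v).symm⟩

lemma _root_.SimpleGraph.Walk.exists_mem_support_forall_le {G : SimpleGraph V} {u v : V}
    (p : G.Walk u v) (f : V → β) : ∃ w ∈ p.support, ∀ x ∈ p.support, f x ≤ f w :=
  Set.exists_max_image _ f p.support.finite_toSet ⟨u, p.start_mem_support⟩

lemma parentGraph_lower_adj_unique (hpar : ∀ v, v ≠ root → r (par v) < r v) {v a b : V}
    (ha : (parentGraph root par).Adj v a) (hb : (parentGraph root par).Adj v b)
    (hav : r a ≤ r v) (hbv : r b ≤ r v) : a = b :=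
  (eq_par_of_parentGraph_adj hpar ha hav).2.trans (eq_par_of_parentGraph_adj hpar hb hbv).2.symm

lemma parentGraph_eq_or_eq_of_isPath_of_forall_le (hpar : ∀ v, v ≠ root → r (par v) < r v)
    {s t w : V} {p : (parentGraph root par).Walk s t} (hp : p.IsPath) (hw : w ∈ p.support)
    (hmax : ∀ x ∈ p.support, r x ≤ r w) : w = s ∨ w = t := by
  obtain ⟨i, rfl, hi⟩ := Walk.mem_support_iff_exists_getVert.1 hw
  by_contra! hne
  have hi0 : i ≠ 0 := fun h => hne.1 (h ▸ p.getVert_zero)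
  have hil : i ≠ p.length := fun h => hne.2 (h ▸ p.getVert_length)
  have hprev : (parentGraph root par).Adj (p.getVert i) (p.getVert (i - 1)) := by
    simpa [Nat.sub_add_cancel (Nat.pos_of_ne_zero hi0)] using
      (p.adj_getVert_succ (i := i - 1) (by omega)).symm
  have hnext := p.adj_getVert_succ (i := i) (by omega)
  have := hp.getVert_injOn (by simp; omega) (by simp; omega)
    (parentGraph_lower_adj_unique hpar hprev hnext (hmax _ (p.getVert_mem_support _))
      (hmax _ (p.getVert_mem_support _)))
  omega

lemma parentGraph_isAcyclic (hpar : ∀ v, v ≠ root → r (par v) < r v) :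
    (parentGraph root par).IsAcyclic := by
  classical
  intro a c hc
  obtain ⟨w, hw, hmax⟩ := c.exists_mem_support_forall_le r
  set c' := c.rotate w hw
  have hc' : c'.IsCycle := hc.rotate hw
  have hmax' : ∀ x ∈ c'.support, r x ≤ r w := fun x hx =>
    hmax x ((Walk.mem_support_rotate_iff _ _ _).1 hx)
  have h3 := hc'.three_le_length
  have hfirst := c'.adj_getVert_succ (i := 0) (by omega)
  have hlast : (parentGraph root par).Adj w (c'.getVert (c'.length - 1)) := by
    simpa [Nat.sub_add_cancel (by omega : 1 ≤ c'.length), Walk.getVert_length] using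
      (c'.adj_getVert_succ (i := c'.length - 1) (by omega)).symm
  rw [Walk.getVert_zero] at hfirst
  have := hc'.getVert_injOn' (by simp; omega) (by simp)
    (parentGraph_lower_adj_unique hpar hfirst hlast (hmax' _ (c'.getVert_mem_support _))
      (hmax' _ (c'.getVert_mem_support _)))
  omega

lemma parentGraph_isTree [WellFoundedLT β] (hpar : ∀ v, v ≠ root → r (par v) < r v) :
    (parentGraph root par).IsTree :=
  ⟨parentGraph_connected hpar, parentGraph_isAcyclic hpar⟩

variable [DecidableEq α] {K : V → Finset α}

lemma parentGraph_inter_subset_of_cons (hpar : ∀ v, v ≠ root → r (par v) < r v)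
    (hr : Function.Injective r) (hK : ∀ s t, r s < r t → K s ∩ K t ⊆ K (par t))
    {s z t u : V} {h : (parentGraph root par).Adj s z} {q : (parentGraph root par).Walk z t}
    (hp : (Walk.cons h q).IsPath) (hmax : ∀ x ∈ (Walk.cons h q).support, r x ≤ r s)
    (hq : ∀ u ∈ q.support, K z ∩ K t ⊆ K u) (hu : u ∈ (Walk.cons h q).support) :
    K s ∩ K t ⊆ K u := by
  obtain ⟨-, rfl⟩ := eq_par_of_parentGraph_adj hpar h (hmax z (by simp))
  have hts : t ≠ s := fun hts => (Walk.cons_isPath_iff _ _).1 hp |>.2 (hts ▸ q.end_mem_support)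
  have hlt : r t < r s := (hmax t (by simp)).lt_of_ne (hr.ne hts)
  rw [Walk.support_cons, List.mem_cons] at hu
  rcases hu with rfl | hu
  · exact inter_subset_left
  · intro x hx
    exact hq u hu (mem_inter.2 ⟨hK t s hlt (by rwa [inter_comm]), (mem_inter.1 hx).2⟩)

lemma parentGraph_hasJunctionProperty (hpar : ∀ v, v ≠ root → r (par v) < r v)
    (hr : Function.Injective r) (hK : ∀ s t, r s < r t → K s ∩ K t ⊆ K (par t)) :
    (parentGraph root par).HasJunctionProperty K := by
  classical
  intro s t u p hp hu
  induction hl : p.length using Nat.strong_induction_on generalizing s t u with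
  | _ l ih =>
  have peel : ∀ {s t : V} (p : (parentGraph root par).Walk s t), p.length = l → p.IsPath →
      (∀ x ∈ p.support, r x ≤ r s) → ∀ u ∈ p.support, K s ∩ K t ⊆ K u := by
    intro s t p hl hp hmax u hu
    cases p with
    | nil =>
      rw [Walk.support_nil, List.mem_singleton] at hu
      exact hu ▸ inter_subset_left
    | cons h q =>
      refine parentGraph_inter_subset_of_cons hpar hr hK hp hmax (fun u hu => ?_) hu
      exact ih _ (by rw [← hl, Walk.length_cons]; omega) _ _ _ q hp.of_cons hu rfl
  obtain ⟨w, hw, hmax⟩ := p.exists_mem_support_forall_le r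
  rcases parentGraph_eq_or_eq_of_isPath_of_forall_le hpar hp hw hmax with rfl | rfl
  · exact peel p hl hp hmax u hu
  · rw [inter_comm]
    refine peel p.reverse (by rw [Walk.length_reverse, hl]) hp.reverse ?_ u (by simpa using hu)
    simpa using hmax

end ParentGraph

section ConnectedOrdering

variable {G : SimpleGraph V} {n : ℕ}

def IsConnectedOrdering (G : SimpleGraph V) (σ : Fin n ≃ V) : Prop :=
  ∀ j : Fin n, 0 < (j : ℕ) → ∃ i < j, G.Adj (σ j) (σ i)

lemma Connected.exists_adj_dist_lt (hG : G.Connected) {u v : V} (hne : v ≠ u) :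
    ∃ w, G.Adj v w ∧ G.dist w u < G.dist v u := by
  obtain ⟨p, hp⟩ := hG.exists_walk_length_eq_dist v u
  cases p with
  | nil => exact absurd rfl hne
  | cons h q => exact ⟨_, h, (dist_le q).trans_lt (by rw [← hp, Walk.length_cons]; omega)⟩

lemma Connected.exists_isConnectedOrdering {G : SimpleGraph (Fin n)} (hG : G.Connected) :
    ∃ σ : Equiv.Perm (Fin n), G.IsConnectedOrdering σ := by
  obtain ⟨root⟩ := hG.nonempty
  let d : Fin n → ℕ := fun v => G.dist v root
  have hmono : Monotone (d ∘ Tuple.sort d) := Tuple.monotone_sort d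
  refine ⟨Tuple.sort d, fun j hj => ?_⟩
  set σ := Tuple.sort d
  have hroot : σ j ≠ root := by
    intro hj_root
    have h0 : d (σ ⟨0, by omega⟩) ≤ d (σ j) :=
      hmono (show (⟨0, _⟩ : Fin n) ≤ j from Nat.zero_le _)
    simp only [d, hj_root, dist_self, Nat.le_zero, hG.dist_eq_zero_iff] at h0
    exact hj.ne (congrArg Fin.val (σ.injective (h0.trans hj_root.symm)))
  obtain ⟨w, hadj, hw⟩ := hG.exists_adj_dist_lt hroot
  refine ⟨σ.symm w, lt_of_not_ge fun hle => ?_, by simpa using hadj⟩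
  have := hmono hle
  simp only [Function.comp_apply, Equiv.apply_symm_apply] at this
  exact this.not_gt hw

variable [NeZero n] {σ : Fin n ≃ V}

lemma IsConnectedOrdering.exists_walk_zero (hσ : G.IsConnectedOrdering σ) (k : Fin n) :
    ∃ W : G.Walk (σ k) (σ 0), ∀ x ∈ W.support, σ.symm x ≤ k := by
  induction k using WellFoundedLT.induction with
  | _ k ih =>
  by_cases hk : (k : ℕ) = 0
  · obtain rfl : k = 0 := Fin.ext hk
    exact ⟨Walk.nil, by simp⟩
  obtain ⟨i, hik, hadj⟩ := hσ k (Nat.pos_of_ne_zero hk)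
  obtain ⟨W, hW⟩ := ih i hik
  refine ⟨Walk.cons hadj W, fun x hx => ?_⟩
  rw [Walk.support_cons, List.mem_cons] at hx
  rcases hx with rfl | hx
  · simp
  · exact (hW x hx).trans hik.le

lemma IsConnectedOrdering.exists_isPath_mem_support (hσ : G.IsConnectedOrdering σ)
    {i i₀ j : Fin n} (hi : i < j) (hi₀ : i₀ < j) (hadj : G.Adj (σ i₀) (σ j)) :
    ∃ p : G.Walk (σ i) (σ j), p.IsPath ∧ σ i₀ ∈ p.support := by
  classical
  obtain ⟨W₁, hW₁⟩ := hσ.exists_walk_zero i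
  obtain ⟨W₂, hW₂⟩ := hσ.exists_walk_zero i₀
  let q := (W₁.append W₂.reverse).toPath
  have hq : ∀ x ∈ q.1.support, σ.symm x < j := by
    intro x hx
    rcases (Walk.mem_support_append_iff _ _).1 (Walk.support_toPath_subset_support _ hx)
      with hx | hx
    · exact (hW₁ x hx).trans_lt hi
    · exact (hW₂ x (by simpa using hx)).trans_lt hi₀
  refine ⟨q.1.concat hadj, q.2.concat (fun h => (hq _ h).ne (by simp)) hadj, ?_⟩
  rw [Walk.support_concat]
  exact List.mem_append_left _ q.1.end_mem_support

theorem HasJunctionProperty.runningIntersection [DecidableEq α] {K : V → Finset α}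
    (hJ : G.HasJunctionProperty K) (hσ : G.IsConnectedOrdering σ) :
    RunningIntersection (K ∘ σ) := by
  intro j hj
  obtain ⟨i₀, hi₀, hadj⟩ := hσ j hj
  refine ⟨i₀, hi₀, fun x hx => ?_⟩
  simp only [Function.comp_apply, mem_inter, mem_biUnion, mem_filter, mem_univ, true_and] at hx
  obtain ⟨hxj, i, hi, hxi⟩ := hx
  obtain ⟨p, hp, hmem⟩ := hσ.exists_isPath_mem_support hi hi₀ hadj.symm
  exact hJ _ _ _ p hp hmem (mem_inter.2 ⟨hxi, hxj⟩)

end ConnectedOrdering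

end SimpleGraph

open SimpleGraph in
theorem RunningIntersection.exists_isTree_hasJunctionProperty [DecidableEq α] {n : ℕ} [NeZero n]
    {σ : Fin n ≃ V} {K : V → Finset α} (h : RunningIntersection (K ∘ σ)) :
    ∃ T : SimpleGraph V, T.IsTree ∧ T.HasJunctionProperty K := by
  choose! par hpar using h
  have hpos : ∀ v, v ≠ σ 0 → 0 < (σ.symm v : ℕ) := fun v hv =>
    Nat.pos_of_ne_zero fun h0 => hv (σ.symm_apply_eq.1 (Fin.ext h0))
  have hrank : ∀ v, v ≠ σ 0 → σ.symm (σ (par (σ.symm v))) < σ.symm v := fun v hv => by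
    simpa using (hpar _ (hpos v hv)).1
  refine ⟨parentGraph (σ 0) (fun v => σ (par (σ.symm v))), parentGraph_isTree hrank,
    parentGraph_hasJunctionProperty hrank σ.symm.injective fun s t hst x hx => ?_⟩
  apply (hpar _ ((Nat.zero_le _).trans_lt hst)).2
  simp only [Function.comp_apply, Equiv.apply_symm_apply, mem_inter, mem_biUnion, mem_filter,
    mem_univ, true_and]
  exact ⟨(mem_inter.1 hx).2, σ.symm s, hst, by simpa using (mem_inter.1 hx).1⟩

end

/-- A finite family of finite sets `K 0, …, K (n-1)` (with `n ≥ 1`)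
admits a reordering satisfying the running intersection property (for every `j ≥ 1`
there is `i < j` with `K_{σ j} ∩ (K_{σ 0} ∪ … ∪ K_{σ (j-1)}) ⊆ K_{σ i}`) if and only
if there is a tree `T` on the index set with the junction property: for all indices
`s, t` and every index `u` on the unique path in `T` between `s` and `t`,
`K s ∩ K t ⊆ K u`. -/
theorem runningIntersection_reordering_iff_junction_tree
    {α : Type*} [DecidableEq α] (n : ℕ) (hn : 1 ≤ n) (K : Fin n → Finset α) :
    (∃ σ : Equiv.Perm (Fin n), ∀ j : Fin n, 0 < (j : ℕ) →
        ∃ i : Fin n, i < j ∧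
          K (σ j) ∩ (Finset.univ.filter (fun i' : Fin n => i' < j)).biUnion
              (fun i' => K (σ i'))
            ⊆ K (σ i))
    ↔ (∃ T : SimpleGraph (Fin n), T.IsTree ∧
        ∀ (s t u : Fin n) (p : T.Walk s t), p.IsPath → u ∈ p.support →
          K s ∩ K t ⊆ K u) := by
  have : NeZero n := NeZero.of_pos hn
  constructor
  · rintro ⟨σ, hσ⟩
    exact RunningIntersection.exists_isTree_hasJunctionProperty (σ := σ) hσ
  · rintro ⟨T, hT, hJ⟩
    obtain ⟨σ, hσ⟩ := hT.connected.exists_isConnectedOrdering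
    exact ⟨σ, SimpleGraph.HasJunctionProperty.runningIntersection (K := K) hJ hσ⟩
end

section
/- (Structural core of the theorem that every k-th order cherry tree copula can be expressed as a (k+1)-th order cherry tree copula.) Let T be a k-th order cherry tree on a finite vertex set V with |V| ≥ k + 1. Then there exists a (k+1)-th order cherry tree T' on V such that every cluster of T is contained in some cluster of T'. -/
/-- A junction tree on a finite vertex set `V`: a finite tree `tree` on a node set
`ι`, with a cluster `K t ⊆ V` at each node, such that the clusters cover `V` and
the junction property holds: for any nodes `s, t` and any node `u` on the (unique)
path between `s` and `t`, `K s ∩ K t ⊆ K u`. -/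
structure JunctionTree (V : Type) [DecidableEq V] where
  ι : Type
  fin : Fintype ι
  tree : SimpleGraph ι
  isTree : tree.IsTree
  K : ι → Finset V
  covers : ∀ v : V, ∃ t : ι, v ∈ K t
  junction : ∀ (s t u : ι) (p : tree.Walk s t), p.IsPath → u ∈ p.support →
    K s ∩ K t ⊆ K u

/-- The separator of an edge `{s, t}` of a junction tree is `K s ∩ K t`. -/
def JunctionTree.sep {V : Type} [DecidableEq V] (J : JunctionTree V) :
    Sym2 J.ι → Finset V :=
  Sym2.lift ⟨fun a b => J.K a ∩ J.K b, fun a b => Finset.inter_comm _ _⟩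

/-- A `k`-th order cherry tree: a junction tree in which every cluster has exactly
`k` elements and the separator of every edge has exactly `k - 1` elements. -/
def JunctionTree.IsCherry {V : Type} [DecidableEq V] (J : JunctionTree V)
    (k : ℕ) : Prop :=
  (∀ t : J.ι, (J.K t).card = k) ∧ ∀ e ∈ J.tree.edgeSet, (J.sep e).card = k - 1

/-!
Root the tree `J` at a leaf `r` and give every other node `x` the cluster `K x ∪ K (parent x)`,
so that each new node stands for the edge from `x` to its parent. Two clusters of size `k` meeting
in `k - 1` vertices have a union of size `k + 1`. Deleting the leaf `r` leaves a tree, and in it a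
node `b` meets its children `a` in `K b`: the junction property along `a, b, parent b` gives
`(K a ∪ K b) ∩ (K b ∪ K (parent b)) = K b`, which has size `k`. The junction property itself
survives because a walk along which a vertex `v` stays in the old clusters extends, by at most one
edge at each end, to a walk along which `v` stays in the new ones, and in a tree the path between
two nodes lies on every walk between them.
-/

namespace SimpleGraph

variable {ι V : Type*} {G : SimpleGraph ι}

def JunctionProperty [DecidableEq V] (G : SimpleGraph ι) (K : ι → Finset V) : Prop :=
  ∀ (s t u : ι) (p : G.Walk s t), p.IsPath → u ∈ p.support → K s ∩ K t ⊆ K u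

namespace JunctionProperty

variable [DecidableEq V] {K : ι → Finset V}

theorem of_exists_walk (hG : G.IsAcyclic)
    (h : ∀ s t v, v ∈ K s → v ∈ K t → ∃ w : G.Walk s t, ∀ x ∈ w.support, v ∈ K x) :
    G.JunctionProperty K := by
  classical
  intro s t u p hp hu v hv
  obtain ⟨w, hw⟩ := h s t v (Finset.mem_inter.1 hv).1 (Finset.mem_inter.1 hv).2
  have hpw : p = w.bypass :=
    congrArg Subtype.val ((hG.subsingleton_path s t).elim ⟨p, hp⟩ ⟨_, w.bypass_isPath⟩)
  exact hw u (w.support_bypass_subset_support (hpw ▸ hu))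

theorem exists_walk (h : G.JunctionProperty K) (hG : G.Preconnected) {s t : ι} {v : V}
    (hs : v ∈ K s) (ht : v ∈ K t) : ∃ w : G.Walk s t, ∀ x ∈ w.support, v ∈ K x := by
  obtain ⟨p, hp⟩ := (hG s t).exists_isPath
  exact ⟨p, fun x hx => h s t x p hp hx (Finset.mem_inter.2 ⟨hs, ht⟩)⟩

theorem inter_subset_of_adj_of_adj (h : G.JunctionProperty K) {a b c : ι} (hab : G.Adj a b)
    (hbc : G.Adj b c) (hac : a ≠ c) : K a ∩ K c ⊆ K b :=
  h a c b (.cons hab (.cons hbc .nil)) (by simp [hab.ne, hbc.ne, hac]) (by simp)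

theorem union_comp (h : G.JunctionProperty K) (hG : G.IsTree) {g : ι → ι}
    (hg : ∀ x, g x ≠ x → G.Adj x (g x)) : G.JunctionProperty fun x => K x ∪ K (g x) := by
  have reach : ∀ x v, v ∈ K x ∪ K (g x) →
      ∃ a, v ∈ K a ∧ ∃ w : G.Walk x a, ∀ y ∈ w.support, v ∈ K y ∪ K (g y) := by
    intro x v hx
    by_cases hv : v ∈ K x
    · exact ⟨x, hv, .nil, by simpa using hx⟩
    · have hvg : v ∈ K (g x) := by simpa [hv] using hx
      have hgx : g x ≠ x := fun h => hv (h ▸ hvg)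
      refine ⟨g x, hvg, .cons (hg x hgx) .nil, ?_⟩
      simp only [Walk.support_cons, Walk.support_nil, List.mem_cons, List.not_mem_nil, or_false]
      rintro y (rfl | rfl)
      exacts [hx, Finset.mem_union_left _ hvg]
  refine of_exists_walk hG.isAcyclic fun s t v hs ht => ?_
  obtain ⟨a, ha, ws, hws⟩ := reach s v hs
  obtain ⟨b, hb, wt, hwt⟩ := reach t v ht
  obtain ⟨w, hw⟩ := h.exists_walk hG.connected.preconnected ha hb
  refine ⟨ws.append (w.append wt.reverse), fun x hx => ?_⟩
  simp only [Walk.mem_support_append_iff, Walk.support_reverse, List.mem_reverse] at hx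
  rcases hx with hx | hx | hx
  · exact hws x hx
  · exact Finset.mem_union_left _ (hw x hx)
  · exact hwt x hx

theorem induce (h : G.JunctionProperty K) (s : Set ι) :
    (G.induce s).JunctionProperty fun x => K x := by
  intro a b u p hp hu
  have hu' : (Embedding.induce (G := G) s).toHom u ∈
      (p.map (Embedding.induce s).toHom).support := by
    rw [Walk.support_map]
    exact List.mem_map_of_mem hu
  exact h _ _ _ _ (hp.map Subtype.val_injective) hu'

end JunctionProperty

namespace IsTree

/-- The neighbour of `x` on the path from `x` to the root `r` (and `r` itself when `x = r`). -/
noncomputable def parent (hG : G.IsTree) (r x : ι) : ι :=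
  (hG.connected.exists_isPath r x).choose.penultimate

variable {hG : G.IsTree} {r a b : ι}

theorem parent_eq_penultimate {p : G.Walk r a} (hp : p.IsPath) : hG.parent r a = p.penultimate := by
  have huniq := (hG.isAcyclic.subsingleton_path r a).elim
    ⟨_, (hG.connected.exists_isPath r a).choose_spec⟩ ⟨p, hp⟩
  exact congrArg (fun q : G.Path r a => q.1.penultimate) huniq

theorem parent_self : hG.parent r r = r :=
  parent_eq_penultimate .nil

theorem adj_parent (ha : a ≠ r) : G.Adj a (hG.parent r a) := by
  obtain ⟨p, hp⟩ := hG.connected.exists_isPath r a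
  rw [parent_eq_penultimate hp]
  exact (p.adj_penultimate (Walk.not_nil_of_ne ha.symm)).symm

theorem parent_eq_or_parent_eq (hab : G.Adj a b) : hG.parent r a = b ∨ hG.parent r b = a := by
  obtain ⟨p, hp⟩ := hG.connected.exists_isPath r a
  obtain ⟨q, hq⟩ := hG.connected.exists_isPath r b
  rw [parent_eq_penultimate hp, parent_eq_penultimate hq]
  by_cases hb : b ∈ p.support
  · exact .inl (hG.isAcyclic.eq_penultimate_of_adj_end hp hab hb).symm
  · have ha := hG.isAcyclic.mem_support_of_ne_mem_support_of_adj_of_isPath hq hp hab.symm hb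
    exact .inr (hG.isAcyclic.eq_penultimate_of_adj_end hq hab.symm ha).symm

theorem parent_parent_ne (ha : a ≠ r) : hG.parent r (hG.parent r a) ≠ a := by
  obtain ⟨p, hp⟩ := hG.connected.exists_isPath r a
  obtain ⟨q, hq⟩ := hG.connected.exists_isPath r (hG.parent r a)
  have hadj := (adj_parent (hG := hG) ha).symm
  have hmem : hG.parent r a ∈ p.support := by
    rw [parent_eq_penultimate hp]
    exact p.getVert_mem_support _
  rw [hG.isAcyclic.path_concat hq hp hadj hmem, Walk.concat_isPath_iff] at hp
  rw [parent_eq_penultimate hq]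
  exact ne_of_mem_of_not_mem (q.getVert_mem_support _) hp.2

end IsTree

end SimpleGraph

open SimpleGraph

namespace JunctionTree

variable {V : Type} [DecidableEq V] {k : ℕ}

theorem junctionProperty (J : JunctionTree V) : J.tree.JunctionProperty J.K :=
  J.junction

theorem isCherry_of_adj {J : JunctionTree V} (hK : ∀ t, (J.K t).card = k)
    (hsep : ∀ a b, J.tree.Adj a b → (J.K a ∩ J.K b).card = k - 1) : J.IsCherry k :=
  ⟨hK, fun e he => by
    induction e using Sym2.ind with
    | _ a b => exact hsep a b he⟩

namespace IsCherry

variable {J : JunctionTree V}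

theorem pos [Nonempty V] (hJ : J.IsCherry k) : 0 < k := by
  obtain ⟨t, ht⟩ := J.covers (Classical.arbitrary V)
  rw [← hJ.1 t]
  exact Finset.card_pos.2 ⟨_, ht⟩

theorem nontrivial [Fintype V] (hJ : J.IsCherry k) (hV : k < Fintype.card V) :
    Nontrivial J.ι := by
  by_contra htriv
  rw [not_nontrivial_iff_subsingleton] at htriv
  have : Nonempty V := Fintype.card_pos_iff.1 (by omega)
  obtain ⟨t, -⟩ := J.covers (Classical.arbitrary V)
  have hcover : Finset.univ ⊆ J.K t := fun v _ => by
    obtain ⟨s, hs⟩ := J.covers v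
    rwa [Subsingleton.elim s t] at hs
  have := Finset.card_le_card hcover
  rw [Finset.card_univ, hJ.1 t] at this
  omega

theorem card_union_of_adj (hJ : J.IsCherry k) (hk : 0 < k) {a b : J.ι} (hab : J.tree.Adj a b) :
    (J.K a ∪ J.K b).card = k + 1 := by
  have hsep : (J.K a ∩ J.K b).card = k - 1 := hJ.2 s(a, b) hab
  have := Finset.card_union_add_card_inter (J.K a) (J.K b)
  rw [hJ.1, hJ.1, hsep] at this
  omega

end IsCherry

variable (J : JunctionTree V) {r : J.ι}

theorem exists_subset_union_parent (hr : ∃ x, x ≠ r) (t : J.ι) :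
    ∃ x ≠ r, J.K t ⊆ J.K x ∪ J.K (J.isTree.parent r x) := by
  by_cases ht : t = r
  · subst ht
    obtain ⟨x, hx⟩ := hr
    obtain ⟨p, -⟩ := J.isTree.connected.exists_isPath t x
    have hc := p.adj_snd (Walk.not_nil_of_ne hx.symm)
    have hpc : J.isTree.parent t p.snd = t := by
      refine (J.isTree.parent_eq_or_parent_eq hc).resolve_left fun h => hc.ne ?_
      rw [← h, IsTree.parent_self]
    exact ⟨p.snd, hc.ne', by rw [hpc]; exact Finset.subset_union_right⟩
  · exact ⟨t, ht, Finset.subset_union_left⟩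

noncomputable def mergeParents (r : J.ι) (hr : (J.tree.induce {r}ᶜ).Connected) :
    JunctionTree V where
  ι := ({r}ᶜ : Set J.ι)
  fin := by classical exact @Subtype.fintype _ _ _ J.fin
  tree := J.tree.induce {r}ᶜ
  isTree := ⟨hr, J.isTree.isAcyclic.induce _⟩
  K x := J.K x ∪ J.K (J.isTree.parent r x)
  covers v := by
    obtain ⟨t, ht⟩ := J.covers v
    obtain ⟨⟨x, hx⟩⟩ := hr.nonempty
    obtain ⟨y, hy, hsub⟩ := J.exists_subset_union_parent ⟨x, hx⟩ t
    exact ⟨⟨y, hy⟩, hsub ht⟩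
  junction := by
    refine ((J.junctionProperty.union_comp J.isTree fun x hx => ?_).induce _)
    exact J.isTree.adj_parent fun h => hx (h ▸ IsTree.parent_self)

variable {J} (hr : (J.tree.induce {r}ᶜ).Connected)

theorem exists_subset_mergeParents (t : J.ι) : ∃ t', J.K t ⊆ (J.mergeParents r hr).K t' := by
  obtain ⟨⟨x, hx⟩⟩ := hr.nonempty
  obtain ⟨y, hy, hsub⟩ := J.exists_subset_union_parent ⟨x, hx⟩ t
  exact ⟨⟨y, hy⟩, hsub⟩

theorem IsCherry.card_inter_mergeParents (hJ : J.IsCherry k) {a b : ({r}ᶜ : Set J.ι)}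
    (hab : J.isTree.parent r a = b) :
    ((J.mergeParents r hr).K a ∩ (J.mergeParents r hr).K b).card = k := by
  obtain ⟨a, ha⟩ := a
  obtain ⟨b, hb⟩ := b
  simp only at hab
  have hsub : J.K a ∩ J.K (J.isTree.parent r b) ⊆ J.K b := by
    refine J.junctionProperty.inter_subset_of_adj_of_adj (hab ▸ J.isTree.adj_parent ha)
      (J.isTree.adj_parent hb) ?_
    exact hab ▸ (IsTree.parent_parent_ne ha).symm
  change ((J.K a ∪ J.K _) ∩ (J.K b ∪ J.K _)).card = k
  rw [hab, Finset.union_comm (J.K a), ← Finset.union_inter_distrib_left,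
    Finset.union_eq_left.2 hsub, hJ.1]

theorem IsCherry.mergeParents (hJ : J.IsCherry k) (hk : 0 < k) :
    (J.mergeParents r hr).IsCherry (k + 1) := by
  refine isCherry_of_adj (fun x => hJ.card_union_of_adj hk (J.isTree.adj_parent x.2)) ?_
  intro a b hab
  rcases J.isTree.parent_eq_or_parent_eq (r := r) hab with h | h
  · rw [hJ.card_inter_mergeParents hr h, Nat.add_sub_cancel]
  · rw [Finset.inter_comm, hJ.card_inter_mergeParents hr h, Nat.add_sub_cancel]

end JunctionTree

/-- structural core of the theorem that every `k`-th order cherry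
tree copula can be expressed as a `(k+1)`-th order cherry tree copula. Let `J` be a
`k`-th order cherry tree on a finite vertex set `V` with `|V| ≥ k + 1`. Then there
exists a `(k+1)`-th order cherry tree `J'` on `V` such that every cluster of `J` is
contained in some cluster of `J'`. -/
theorem cherryTree_to_higher_order_cherryTree {V : Type} [Fintype V] [DecidableEq V]
    (k : ℕ) (J : JunctionTree V)
    (hJ : J.IsCherry k)
    (hV : k + 1 ≤ Fintype.card V) :
    ∃ J' : JunctionTree V, J'.IsCherry (k + 1) ∧
      ∀ t : J.ι, ∃ t' : J'.ι, J.K t ⊆ J'.K t' := by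
  classical
  have := J.fin
  have : Nonempty V := Fintype.card_pos_iff.1 (by omega)
  have := hJ.nontrivial (by omega)
  obtain ⟨r, hr⟩ := J.isTree.exists_vert_degree_one_of_nontrivial
  have hconn := J.isTree.connected.induce_compl_singleton_of_degree_eq_one hr
  exact ⟨J.mergeParents r hconn, hJ.mergeParents hconn hJ.pos,
    JunctionTree.exists_subset_mergeParents hconn⟩
end
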